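/- If X − Y − Z forms a Markov chain and U is uniform on a finite abelian group G and independent of (X, Y, Z), then with Y' = (Y, U ⊕ X) and Z' = (Z, U ⊕ X), the triple U − Y' − Z' forms a Markov chain, i.e., I(U ; Z' | Y') = 0. -/

import Mathlib

/-!
Each of the four entropies in `I(U; Z' | Y')` is the entropy of a bijective image of a pair
`(W, V)`, where `V` is one of `(X, Y)`, `(Z, Y)`, `(X, Z, Y)`, `Y` and `W` is uniform on `G` and
independent of `V`: `W = U`, or `W = U + X`, which is uniform and independent of `(Y, Z)` because
`U` is. Such an entropy is `H(V) + log |G|`, so the four `log |G|` cancel and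
`I(U; Z' | Y') = I(X; Z | Y) = 0`.
-/

open Finset

/-- The pmf of the random variable `V` on the finite probability space `(Ω, μ)`. -/
noncomputable def pdist {Ω β : Type*} [Fintype Ω] [DecidableEq β]
    (μ : Ω → ℝ) (V : Ω → β) (b : β) : ℝ :=
  ∑ ω, if V ω = b then μ ω else 0

/-- Shannon entropy (base 2) of a pmf, with the convention `0 * log 0 = 0`. -/
noncomputable def ent2 {α : Type*} [Fintype α] (p : α → ℝ) : ℝ :=
  ∑ x, if p x = 0 then 0 else -(p x * Real.logb 2 (p x))

section pdist

variable {Ω α β : Type*} [Fintype Ω] [DecidableEq α] [DecidableEq β] (μ : Ω → ℝ)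

lemma pdist_comp [Fintype α] (V : Ω → α) (f : α → β) (b : β) :
    pdist μ (fun ω => f (V ω)) b = ∑ a, if f a = b then pdist μ V a else 0 := by
  simp only [pdist, ← sum_filter]
  rw [sum_fiberwise_eq_sum_filter]
  simp

lemma pdist_comp_apply_of_injective {V : Ω → α} {f : α → β} (hf : f.Injective) (a : α) :
    pdist μ (fun ω => f (V ω)) (f a) = pdist μ V a := by
  simp only [pdist, hf.eq_iff]

lemma sum_pdist_pair_fst [Fintype α] (A : Ω → α) (V : Ω → β) (b : β) :
    ∑ a, pdist μ (fun ω => (A ω, V ω)) (a, b) = pdist μ V b := by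
  simp only [pdist, Prod.ext_iff, ite_and]
  rw [sum_comm]
  simp [sum_ite_eq]

lemma sum_pdist_eq_one [Fintype α] {μ : Ω → ℝ} (h1 : ∑ ω, μ ω = 1) (V : Ω → α) :
    ∑ a, pdist μ V a = 1 := by
  simp only [pdist]
  rw [sum_comm]
  simpa [sum_ite_eq] using h1

end pdist

lemma ent2_pdist_comp_of_injective {Ω α β : Type*} [Fintype Ω] [Fintype α] [Fintype β]
    [DecidableEq α] [DecidableEq β] (μ : Ω → ℝ) (V : Ω → α) {f : α → β} (hf : f.Injective) :
    ent2 (pdist μ (fun ω => f (V ω))) = ent2 (pdist μ V) := by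
  refine (Fintype.sum_of_injective f hf _ _ (fun b hb => ?_) fun a => ?_).symm
  · have : pdist μ (fun ω => f (V ω)) b = 0 := by
      rw [pdist_comp]
      exact sum_eq_zero fun a _ => if_neg fun h => hb ⟨a, h⟩
    simp [this]
  · rw [pdist_comp_apply_of_injective μ hf]

lemma ent2_uniform_prod {G α : Type*} [Fintype G] [Nonempty G] [Fintype α] {q : α → ℝ}
    (hq : ∑ a, q a = 1) :
    ent2 (fun p : G × α => q p.2 / Fintype.card G) = ent2 q + Real.logb 2 (Fintype.card G) := by
  have hn : (0 : ℝ) < Fintype.card G := by exact_mod_cast Fintype.card_pos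
  have hterm : ∀ a, (Fintype.card G : ℝ) *
      (if q a / Fintype.card G = 0 then 0
        else -(q a / Fintype.card G * Real.logb 2 (q a / Fintype.card G)))
      = (if q a = 0 then 0 else -(q a * Real.logb 2 (q a)))
        + q a * Real.logb 2 (Fintype.card G) := by
    intro a
    by_cases h : q a = 0
    · simp [h]
    · rw [if_neg (div_ne_zero h hn.ne'), if_neg h, Real.logb_div h hn.ne']
      field_simp
      ring
  simp only [ent2, Fintype.sum_prod_type, sum_const, card_univ, nsmul_eq_mul,
    mul_sum]
  rw [sum_congr rfl fun a _ => hterm a, sum_add_distrib, ← sum_mul, hq,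
    one_mul]

def IsUniformIndep {Ω G β : Type*} [Fintype Ω] [Fintype G] [DecidableEq G] [DecidableEq β]
    (μ : Ω → ℝ) (W : Ω → G) (V : Ω → β) : Prop :=
  ∀ g b, pdist μ (fun ω => (W ω, V ω)) (g, b) = pdist μ V b / Fintype.card G

namespace IsUniformIndep

variable {Ω G β γ : Type*} [Fintype Ω] [Fintype G] [DecidableEq G] [DecidableEq β]
  [DecidableEq γ] {μ : Ω → ℝ}

lemma comp [Fintype β] {W : Ω → G} {V : Ω → β} (h : IsUniformIndep μ W V) (f : β → γ) :
    IsUniformIndep μ W (fun ω => f (V ω)) := by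
  intro g c
  refine (pdist_comp μ (fun ω => (W ω, V ω)) (Prod.map id f) (g, c)).trans ?_
  rw [pdist_comp, sum_div]
  simp [Fintype.sum_prod_type, Prod.ext_iff, ite_and, ite_div, h g]

lemma add [AddCommGroup G] {U X : Ω → G} {V : Ω → β}
    (h : IsUniformIndep μ U fun ω => (X ω, V ω)) :
    IsUniformIndep μ (fun ω => U ω + X ω) V := by
  intro s b
  have hshift : (fun p : G × G × β => (p.2.1, p.1 + p.2.1, p.2.2)).Injective :=
    Function.LeftInverse.injective (g := fun p => (p.2.1 - p.1, p.1, p.2.2)) fun p => by simp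
  calc pdist μ (fun ω => (U ω + X ω, V ω)) (s, b)
      = ∑ x, pdist μ (fun ω => (X ω, U ω + X ω, V ω)) (x, s, b) :=
        (sum_pdist_pair_fst μ X _ _).symm
    _ = ∑ x, pdist μ (fun ω => (U ω, X ω, V ω)) (s - x, x, b) := by
        refine sum_congr rfl fun x _ => ?_
        simpa using
          pdist_comp_apply_of_injective μ (V := fun ω => (U ω, X ω, V ω)) hshift (s - x, x, b)
    _ = pdist μ V b / Fintype.card G := by
        rw [sum_congr rfl fun x _ => h (s - x) (x, b), ← sum_div, sum_pdist_pair_fst]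

lemma ent2_pdist_comp_of_injective [Fintype β] [Fintype γ] [Nonempty G]
    {W : Ω → G} {V : Ω → β} (h : IsUniformIndep μ W V) (h1 : ∑ ω, μ ω = 1)
    {f : G × β → γ} (hf : f.Injective) :
    ent2 (pdist μ fun ω => f (W ω, V ω)) = ent2 (pdist μ V) + Real.logb 2 (Fintype.card G) := by
  rw [_root_.ent2_pdist_comp_of_injective μ _ hf, ← ent2_uniform_prod (sum_pdist_eq_one h1 V)]
  exact congrArg ent2 (funext fun p => h p.1 p.2)

end IsUniformIndep

theorem stmt11_general {Ω G β γ : Type*} [Fintype Ω] [Fintype G] [DecidableEq G] [AddCommGroup G]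
    [Fintype β] [DecidableEq β] [Fintype γ] [DecidableEq γ]
    (μ : Ω → ℝ) (h1 : ∑ ω, μ ω = 1)
    (U X : Ω → G) (Y : Ω → β) (Z : Ω → γ)
    (hU : ∀ g, pdist μ U g = 1 / (Fintype.card G : ℝ))
    (hind : ∀ g w, pdist μ (fun ω => (U ω, (X ω, Y ω, Z ω))) (g, w)
        = pdist μ U g * pdist μ (fun ω => (X ω, Y ω, Z ω)) w)
    (hMarkov :
      ent2 (pdist μ (fun ω => (X ω, Y ω)))
        + ent2 (pdist μ (fun ω => (Z ω, Y ω)))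
        - ent2 (pdist μ (fun ω => (X ω, Z ω, Y ω)))
        - ent2 (pdist μ Y) = 0) :
    ent2 (pdist μ (fun ω => (U ω, (Y ω, U ω + X ω))))
      + ent2 (pdist μ (fun ω => ((Z ω, U ω + X ω), (Y ω, U ω + X ω))))
      - ent2 (pdist μ (fun ω => (U ω, (Z ω, U ω + X ω), (Y ω, U ω + X ω))))
      - ent2 (pdist μ (fun ω => (Y ω, U ω + X ω))) = 0 := by
  have hUXYZ : IsUniformIndep μ U fun ω => (X ω, Y ω, Z ω) := fun g w => by
    rw [hind, hU, one_div_mul_eq_div]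
  have hUXY := hUXYZ.comp fun w => (w.1, w.2.1)
  have hUXZY := hUXYZ.comp fun w => (w.1, w.2.2, w.2.1)
  have E1 : ent2 (pdist μ fun ω => (U ω, Y ω, U ω + X ω))
      = ent2 (pdist μ fun ω => (X ω, Y ω)) + Real.logb 2 (Fintype.card G) :=
    hUXY.ent2_pdist_comp_of_injective h1 (f := fun p => (p.1, p.2.2, p.1 + p.2.1))
      (Function.LeftInverse.injective (g := fun p => (p.1, p.2.2 - p.1, p.2.1)) fun p => by simp)
  have E2 : ent2 (pdist μ fun ω => ((Z ω, U ω + X ω), (Y ω, U ω + X ω)))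
      = ent2 (pdist μ fun ω => (Z ω, Y ω)) + Real.logb 2 (Fintype.card G) :=
    hUXZY.add.ent2_pdist_comp_of_injective h1 (f := fun p => ((p.2.1, p.1), (p.2.2, p.1)))
      (Function.LeftInverse.injective (g := fun p => (p.1.2, p.1.1, p.2.1)) fun p => rfl)
  have E3 : ent2 (pdist μ fun ω => (U ω, (Z ω, U ω + X ω), (Y ω, U ω + X ω)))
      = ent2 (pdist μ fun ω => (X ω, Z ω, Y ω)) + Real.logb 2 (Fintype.card G) :=
    hUXZY.ent2_pdist_comp_of_injective h1
      (f := fun p => (p.1, (p.2.2.1, p.1 + p.2.1), (p.2.2.2, p.1 + p.2.1)))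
      (Function.LeftInverse.injective (g := fun p => (p.1, p.2.1.2 - p.1, p.2.1.1, p.2.2.1))
        fun p => by simp)
  have E4 : ent2 (pdist μ fun ω => (Y ω, U ω + X ω))
      = ent2 (pdist μ Y) + Real.logb 2 (Fintype.card G) :=
    hUXY.add.ent2_pdist_comp_of_injective h1 Prod.swap_injective
  rw [E1, E2, E3, E4]
  linarith

/-- If X − Y − Z is a Markov chain (I(X;Z|Y) = 0) and U is uniform on a finite abelian
group G and independent of (X,Y,Z), then with Y' = (Y, U⊕X) and Z' = (Z, U⊕X),
U − Y' − Z' is a Markov chain, i.e. I(U; Z' | Y') = 0, where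
I(A;B|C) = H(A,C) + H(B,C) − H(A,B,C) − H(C). -/
theorem stmt11 {Ω G β γ : Type*} [Fintype Ω] [Fintype G] [DecidableEq G] [AddCommGroup G]
    [Fintype β] [DecidableEq β] [Fintype γ] [DecidableEq γ]
    (μ : Ω → ℝ) (h0 : ∀ ω, 0 ≤ μ ω) (h1 : ∑ ω, μ ω = 1)
    (U X : Ω → G) (Y : Ω → β) (Z : Ω → γ)
    (hU : ∀ g, pdist μ U g = 1 / (Fintype.card G : ℝ))
    (hind : ∀ g w, pdist μ (fun ω => (U ω, (X ω, Y ω, Z ω))) (g, w)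
        = pdist μ U g * pdist μ (fun ω => (X ω, Y ω, Z ω)) w)
    (hMarkov :
      ent2 (pdist μ (fun ω => (X ω, Y ω)))
        + ent2 (pdist μ (fun ω => (Z ω, Y ω)))
        - ent2 (pdist μ (fun ω => (X ω, Z ω, Y ω)))
        - ent2 (pdist μ Y) = 0) :
    ent2 (pdist μ (fun ω => (U ω, (Y ω, U ω + X ω))))
      + ent2 (pdist μ (fun ω => ((Z ω, U ω + X ω), (Y ω, U ω + X ω))))
      - ent2 (pdist μ (fun ω => (U ω, (Z ω, U ω + X ω), (Y ω, U ω + X ω))))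
      - ent2 (pdist μ (fun ω => (Y ω, U ω + X ω))) = 0 :=
  stmt11_general μ h1 U X Y Z hU hind hMarkov
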